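/- arXiv:2008.12776 — 7 statements merged into one kernel-verified Lean document; each statement's English description precedes it below -/
import Mathlib

section
/- Let P be a row-stochastic matrix with stationary distribution ν, and set P̂ := P − 1νᵀ. If ‖P̂^k‖_∞ ≤ (1/2)^{⌊k/t_mix⌋} for all k ≥ 0, then the series Σ_{t=0}^∞ P̂^t converges, equals (I − P̂)^{-1}, and satisfies ‖(I − P + 1νᵀ)^{-1}‖_∞ ≤ 2 t_mix. -/
/-!
The exponent `⌊t / t_mix⌋` takes each value exactly `t_mix` times, so the bounds
`‖P̂ ^ t‖_∞ ≤ 2 ^ (-⌊t / t_mix⌋)` sum to `2 t_mix`. Hence the Neumann series `∑ P̂ ^ t` converges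
absolutely in the (complete, finite-dimensional) space of matrices with the `∞`-operator norm,
its limit inverts `1 - P̂` on both sides by telescoping, and its norm is at most `2 t_mix`.
-/

open Finset

/-- Operator ∞-norm of a matrix: maximum absolute row sum. -/
noncomputable def matNormInf {S : Type*} [Fintype S] [Nonempty S] (A : Matrix S S ℝ) : ℝ :=
  Finset.univ.sup' Finset.univ_nonempty (fun i => ∑ j, |A i j|)

theorem HasSum.comp_div {f : ℕ → ℝ} {s : ℝ} (hf : HasSum f s) (m : ℕ) [NeZero m] :
    HasSum (fun k => f (k / m)) (m * s) := by
  have hone : HasSum (fun _ : Fin m => (1 : ℝ)) m := by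
    simpa using hasSum_fintype fun _ : Fin m => (1 : ℝ)
  have hprod : HasSum (fun p : ℕ × Fin m => f p.1 * 1) (s * m) :=
    hf.mul hone (summable_mul_of_summable_norm hf.summable.norm hone.summable.norm)
  simpa [mul_comm, Function.comp_def] using (Nat.divModEquiv m).hasSum_iff.mpr hprod

theorem hasSum_half_pow_div (m : ℕ) [NeZero m] :
    HasSum (fun k => (1 / 2 : ℝ) ^ (k / m)) (2 * m) := by
  simpa [mul_comm] using hasSum_geometric_two.comp_div m

section LinftyOp

attribute [local instance] Matrix.linftyOpNormedAddCommGroup Matrix.linftyOpNormedSpace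

variable {S : Type*} [Fintype S] [Nonempty S]

theorem matNormInf_eq_norm (A : Matrix S S ℝ) : matNormInf A = ‖A‖ := by
  rw [Matrix.linfty_opNorm_def, ← Finset.sup'_eq_sup Finset.univ_nonempty,
    Finset.apply_sup'_eq_sup'_comp _ _ NNReal.coe_max, matNormInf]
  refine Finset.sup'_congr _ rfl fun i _ => ?_
  simp [NNReal.coe_sum]

theorem matNormInf_nonneg (A : Matrix S S ℝ) : 0 ≤ matNormInf A :=
  (matNormInf_eq_norm A).symm ▸ norm_nonneg A

theorem Summable.of_matNormInf {f : ℕ → Matrix S S ℝ}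
    (hf : Summable fun n => matNormInf (f n)) : Summable f := by
  have : CompleteSpace (Matrix S S ℝ) := FiniteDimensional.complete ℝ _
  exact Summable.of_norm (by simpa only [matNormInf_eq_norm] using hf)

theorem matNormInf_tsum_le {f : ℕ → Matrix S S ℝ} (hf : Summable fun n => matNormInf (f n)) :
    matNormInf (∑' n, f n) ≤ ∑' n, matNormInf (f n) := by
  simp only [matNormInf_eq_norm] at hf ⊢
  exact norm_tsum_le_tsum_norm hf

end LinftyOp

theorem stmt3_general {S : Type*} [Fintype S] [DecidableEq S] [Nonempty S]
    (tmix : ℕ) (htmix : 0 < tmix)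
    (Phat : Matrix S S ℝ)
    (hpow : ∀ k : ℕ, matNormInf (Phat ^ k) ≤ (1 / 2 : ℝ) ^ (k / tmix)) :
    ∃ B : Matrix S S ℝ,
      (∀ i j, HasSum (fun t : ℕ => (Phat ^ t) i j) (B i j)) ∧
      (1 - Phat) * B = 1 ∧ B * (1 - Phat) = 1 ∧
      matNormInf B ≤ 2 * tmix := by
  have : NeZero tmix := ⟨htmix.ne'⟩
  have hgeom := hasSum_half_pow_div tmix
  have hnorm : Summable fun t => matNormInf (Phat ^ t) :=
    hgeom.summable.of_nonneg_of_le (fun t => matNormInf_nonneg _) hpow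
  have hsum : Summable (Phat ^ ·) := Summable.of_matNormInf hnorm
  refine ⟨∑' t, Phat ^ t, fun i j => Pi.hasSum.mp (Pi.hasSum.mp hsum.hasSum i) j,
    hsum.one_sub_mul_tsum_pow, hsum.tsum_pow_mul_one_sub, ?_⟩
  calc matNormInf (∑' t, Phat ^ t) ≤ ∑' t, matNormInf (Phat ^ t) := matNormInf_tsum_le hnorm
    _ ≤ ∑' t, (1 / 2 : ℝ) ^ (t / tmix) := hnorm.tsum_le_tsum hpow hgeom.summable
    _ = 2 * tmix := hgeom.tsum_eq

theorem stmt3 {S : Type*} [Fintype S] [DecidableEq S] [Nonempty S]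
    (P : Matrix S S ℝ) (hPnn : ∀ i j, 0 ≤ P i j) (hProw : ∀ i, ∑ j, P i j = 1)
    (ν : S → ℝ) (hνnn : ∀ i, 0 ≤ ν i) (hνsum : ∑ i, ν i = 1)
    (hstat : ∀ j, ∑ i, ν i * P i j = ν j)
    (tmix : ℕ) (htmix : 0 < tmix)
    (Phat : Matrix S S ℝ) (hPhat : Phat = P - Matrix.of (fun _ j => ν j))
    (hpow : ∀ k : ℕ, matNormInf (Phat ^ k) ≤ (1 / 2 : ℝ) ^ (k / tmix)) :
    ∃ B : Matrix S S ℝ,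
      (∀ i j, HasSum (fun t : ℕ => (Phat ^ t) i j) (B i j)) ∧
      (1 - Phat) * B = 1 ∧ B * (1 - Phat) = 1 ∧
      matNormInf B ≤ 2 * tmix :=
  stmt3_general tmix htmix Phat hpow
end

section
/- Fix y ∈ Δ^m (the probability simplex), a matrix M ∈ R^{m×n}, and b ∈ R^n. Define a random vector g̃ by: sample (i,j) with probability p_{ij} = y_i·|M_{ij}|/Σ_{j'}|M_{ij'}| and independently j' with probability |b_{j'}|/‖b‖_1, and set g̃ = (M_{ij} y_i / p_{ij}) e_j + (b_{j'}/p_{j'}) e_{j'}. Then E[g̃] = Mᵀy + b and E[‖g̃‖_2²] ≤ 2(‖b‖_1² + ‖M‖_∞²), where ‖M‖_∞ := max_i Σ_j |M_{ij}|. -/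
/-!
Both halves are importance sampling. If `p` is a probability vector that vanishes only where
`v` does, the one-hot estimator `(v i / p i) e_{f i}` drawn from `p` has mean `∑ i, v i e_{f i}`
and second moment `∑ i, v i ^ 2 / p i`; for `p i ∝ |v i|` (row by row for `M`) the latter is
`‖b‖₁²` for the `b`-part and `∑ i, y i (∑ j, |M i j|)² ≤ ‖M‖∞²` for the `M`-part. The two parts
are drawn independently, so the mean is additive, and `(a + b)² ≤ 2a² + 2b²` bounds the second
moment of the sum.
-/

open Finset

section ImportanceSampling

variable {ι κ : Type*} [Fintype ι]

theorem mul_div_sq_eq_sq_div (p v : ℝ) : p * (v / p) ^ 2 = v ^ 2 / p := by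
  rcases eq_or_ne p 0 with rfl | hp
  · simp
  · field_simp

theorem sum_mul_ite_div_eq [DecidableEq κ] {p v : ι → ℝ} (hpv : ∀ i, p i = 0 → v i = 0)
    (f : ι → κ) (k : κ) :
    ∑ i, p i * (if k = f i then v i / p i else 0) = ∑ i, if k = f i then v i else 0 := by
  refine sum_congr rfl fun i _ => ?_
  split_ifs
  · rw [← mul_div_assoc, mul_div_cancel_left_of_imp (hpv i)]
  · exact mul_zero _

theorem sum_mul_sum_sq_ite_eq [Fintype κ] [DecidableEq κ] (p v : ι → ℝ) (f : ι → κ) :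
    ∑ i, p i * ∑ k, (if k = f i then v i / p i else 0) ^ 2 = ∑ i, v i ^ 2 / p i := by
  simp [apply_ite (· ^ 2), mul_div_sq_eq_sq_div]

theorem sum_abs_pos {b : ι → ℝ} (hb : b ≠ 0) : 0 < ∑ j, |b j| := by
  obtain ⟨j, hj⟩ := Function.ne_iff.mp hb
  exact sum_pos' (fun j _ => abs_nonneg _) ⟨j, mem_univ j, abs_pos.2 hj⟩

theorem sq_div_abs_div (x S : ℝ) : x ^ 2 / (|x| / S) = |x| * S := by
  rcases eq_or_ne x 0 with rfl | hx
  · simp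
  rcases eq_or_ne S 0 with rfl | hS
  · simp
  rw [← sq_abs]
  field_simp

theorem eq_zero_of_abs_div_sum_abs_eq_zero {b : ι → ℝ} {j : ι} (h : |b j| / ∑ j', |b j'| = 0) :
    b j = 0 := by
  rcases div_eq_zero_iff.mp h with h | h
  · exact abs_eq_zero.mp h
  · exact abs_eq_zero.mp ((sum_eq_zero_iff_of_nonneg fun j _ => abs_nonneg _).mp h j (mem_univ j))

theorem sum_abs_div_sum_abs {b : ι → ℝ} (hb : b ≠ 0) : ∑ j, |b j| / ∑ j', |b j'| = 1 := by
  rw [← sum_div, div_self (sum_abs_pos hb).ne']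

theorem sum_sq_div_abs_div_sum_abs (b : ι → ℝ) :
    ∑ j, b j ^ 2 / (|b j| / ∑ j', |b j'|) = (∑ j, |b j|) ^ 2 := by
  simp_rw [sq_div_abs_div]
  rw [← sum_mul, sq]

end ImportanceSampling

section RowSampling

variable {ι κ : Type*} [Fintype κ] {M : ι → κ → ℝ} {y : ι → ℝ}

theorem sum_mul_abs_div_sum_abs [Fintype ι] (hy : ∑ i, y i = 1) (hM : ∀ i, M i ≠ 0) :
    ∑ ij : ι × κ, y ij.1 * |M ij.1 ij.2| / ∑ j', |M ij.1 j'| = 1 := by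
  simp only [Fintype.sum_prod_type, mul_div_assoc, ← mul_sum, sum_abs_div_sum_abs (hM _), mul_one,
    hy]

theorem mul_eq_zero_of_mul_abs_div_sum_abs_eq_zero {i : ι} {j : κ}
    (h : y i * |M i j| / ∑ j', |M i j'| = 0) : M i j * y i = 0 := by
  rw [mul_div_assoc] at h
  rcases mul_eq_zero.mp h with h | h
  · rw [h, mul_zero]
  · rw [eq_zero_of_abs_div_sum_abs_eq_zero h, zero_mul]

theorem sum_sq_div_mul_abs_div_sum_abs_le [Fintype ι] [Nonempty ι] (hy₀ : ∀ i, 0 ≤ y i)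
    (hy : ∑ i, y i = 1) :
    ∑ ij : ι × κ, (M ij.1 ij.2 * y ij.1) ^ 2 / (y ij.1 * |M ij.1 ij.2| / ∑ j', |M ij.1 j'|) ≤
      (univ.sup' univ_nonempty fun i => ∑ j, |M i j|) ^ 2 := by
  set N := univ.sup' univ_nonempty fun i => ∑ j, |M i j|
  have hterm : ∀ i j, (M i j * y i) ^ 2 / (y i * |M i j| / ∑ j', |M i j'|) =
      y i * |M i j| * ∑ j', |M i j'| := fun i j => by
    have : y i * |M i j| = |M i j * y i| := by rw [abs_mul, abs_of_nonneg (hy₀ i), mul_comm]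
    rw [this, sq_div_abs_div]
  calc ∑ ij : ι × κ, (M ij.1 ij.2 * y ij.1) ^ 2 / (y ij.1 * |M ij.1 ij.2| / ∑ j', |M ij.1 j'|)
      = ∑ i, y i * (∑ j, |M i j|) ^ 2 := by
        simp only [Fintype.sum_prod_type, hterm]
        simp only [← sum_mul, ← mul_sum, sq, mul_assoc]
    _ ≤ ∑ i, y i * N ^ 2 := by
        gcongr with i
        · exact hy₀ i
        · exact le_sup' (fun i => ∑ j, |M i j|) (mem_univ i)
    _ = N ^ 2 := by rw [← sum_mul, hy, one_mul]

end RowSampling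

section ProductSampling

variable {α β κ : Type*} [Fintype α] [Fintype β] {p : α → ℝ} {q : β → ℝ}

theorem sum_prod_mul_mul_add (hp : ∑ a, p a = 1) (hq : ∑ c, q c = 1) (u : α → ℝ) (w : β → ℝ) :
    ∑ ω : α × β, p ω.1 * q ω.2 * (u ω.1 + w ω.2) = ∑ a, p a * u a + ∑ c, q c * w c := by
  simp only [mul_add, sum_add_distrib]
  congr 1
  · simp only [Fintype.sum_prod_type, ← mul_sum, ← sum_mul, hq, mul_one]
  · simp only [Fintype.sum_prod_type_right, ← sum_mul, hp, one_mul]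

theorem sum_prod_mul_mul_sum_sq_add_le [Fintype κ] (hp : ∑ a, p a = 1) (hq : ∑ c, q c = 1)
    (hp₀ : ∀ a, 0 ≤ p a) (hq₀ : ∀ c, 0 ≤ q c) (u : α → κ → ℝ) (w : β → κ → ℝ) :
    ∑ ω : α × β, p ω.1 * q ω.2 * ∑ k, (u ω.1 k + w ω.2 k) ^ 2 ≤
      2 * ∑ a, p a * ∑ k, u a k ^ 2 + 2 * ∑ c, q c * ∑ k, w c k ^ 2 := by
  calc ∑ ω : α × β, p ω.1 * q ω.2 * ∑ k, (u ω.1 k + w ω.2 k) ^ 2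
      ≤ ∑ ω : α × β, p ω.1 * q ω.2 * (2 * ∑ k, u ω.1 k ^ 2 + 2 * ∑ k, w ω.2 k ^ 2) := by
        gcongr with ω _
        · exact mul_nonneg (hp₀ _) (hq₀ _)
        · simp only [mul_sum, ← sum_add_distrib]
          exact sum_le_sum fun k _ => add_sq_le.trans_eq (mul_add _ _ _)
    _ = _ := by
        rw [sum_prod_mul_mul_add hp hq (fun a => 2 * ∑ k, u a k ^ 2) fun c => 2 * ∑ k, w c k ^ 2]
        simp only [mul_left_comm _ (2 : ℝ), ← mul_sum]

end ProductSampling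

theorem stmt6_general {m n : ℕ} [NeZero m]
    (M : Matrix (Fin m) (Fin n) ℝ) (b : Fin n → ℝ)
    (y : Fin m → ℝ) (hynn : ∀ i, 0 ≤ y i) (hysum : ∑ i, y i = 1)
    (hrows : ∀ i, ∃ j, M i j ≠ 0) (hb : b ≠ 0)
    (pM : Fin m × Fin n → ℝ) (hpM : ∀ ij, pM ij = y ij.1 * |M ij.1 ij.2| / ∑ j', |M ij.1 j'|)
    (pb : Fin n → ℝ) (hpb : ∀ j', pb j' = |b j'| / ∑ j, |b j|)
    (g : (Fin m × Fin n) × Fin n → Fin n → ℝ)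
    (hg : ∀ ω k, g ω k =
      (if k = ω.1.2 then M ω.1.1 ω.1.2 * y ω.1.1 / pM ω.1 else 0) +
      (if k = ω.2 then b ω.2 / pb ω.2 else 0)) :
    (∀ k, ∑ ω : (Fin m × Fin n) × Fin n, (pM ω.1 * pb ω.2) * g ω k
        = (∑ i, M i k * y i) + b k) ∧
    (∑ ω : (Fin m × Fin n) × Fin n, (pM ω.1 * pb ω.2) * (∑ k, (g ω k) ^ 2)
        ≤ 2 * ((∑ j, |b j|) ^ 2 +
          (Finset.univ.sup' Finset.univ_nonempty (fun i => ∑ j, |M i j|)) ^ 2)) := by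
  have hpM₁ : ∑ ij, pM ij = 1 := by
    simp only [hpM]
    exact sum_mul_abs_div_sum_abs hysum fun i => Function.ne_iff.mpr (hrows i)
  have hpb₁ : ∑ j, pb j = 1 := by
    simp only [hpb]
    exact sum_abs_div_sum_abs hb
  have hpM₀ : ∀ ij, 0 ≤ pM ij := fun ij => by rw [hpM]; have := hynn ij.1; positivity
  have hpb₀ : ∀ j, 0 ≤ pb j := fun j => by rw [hpb]; positivity
  have hpMv : ∀ ij, pM ij = 0 → M ij.1 ij.2 * y ij.1 = 0 := fun ij h =>
    mul_eq_zero_of_mul_abs_div_sum_abs_eq_zero ((hpM ij).symm.trans h)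
  have hpbv : ∀ j, pb j = 0 → b j = 0 := fun j h =>
    eq_zero_of_abs_div_sum_abs_eq_zero ((hpb j).symm.trans h)
  set u : Fin m × Fin n → Fin n → ℝ := fun ij k =>
    if k = ij.2 then M ij.1 ij.2 * y ij.1 / pM ij else 0
  set w : Fin n → Fin n → ℝ := fun j k => if k = j then b j / pb j else 0
  have hg' : ∀ ω k, g ω k = u ω.1 k + w ω.2 k := hg
  simp only [hg']
  constructor
  · intro k
    rw [sum_prod_mul_mul_add hpM₁ hpb₁ (u · k) (w · k), sum_mul_ite_div_eq hpMv,
      sum_mul_ite_div_eq hpbv]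
    simp [Fintype.sum_prod_type]
  · refine (sum_prod_mul_mul_sum_sq_add_le hpM₁ hpb₁ hpM₀ hpb₀ u w).trans ?_
    rw [sum_mul_sum_sq_ite_eq, sum_mul_sum_sq_ite_eq]
    simp only [hpM, hpb]
    linarith [sum_sq_div_mul_abs_div_sum_abs_le (M := M) hynn hysum, sum_sq_div_abs_div_sum_abs b]

/-- The x-side gradient estimator for the ℓ∞-ℓ₁ game: it is unbiased for `Mᵀy + b`
and has second moment at most `2(‖b‖₁² + ‖M‖∞²)`. -/
theorem stmt6 {m n : ℕ} [NeZero m] [NeZero n]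
    (M : Matrix (Fin m) (Fin n) ℝ) (b : Fin n → ℝ)
    (y : Fin m → ℝ) (hynn : ∀ i, 0 ≤ y i) (hysum : ∑ i, y i = 1)
    (hrows : ∀ i, ∃ j, M i j ≠ 0) (hb : b ≠ 0)
    (pM : Fin m × Fin n → ℝ) (hpM : ∀ ij, pM ij = y ij.1 * |M ij.1 ij.2| / ∑ j', |M ij.1 j'|)
    (pb : Fin n → ℝ) (hpb : ∀ j', pb j' = |b j'| / ∑ j, |b j|)
    (g : (Fin m × Fin n) × Fin n → Fin n → ℝ)
    (hg : ∀ ω k, g ω k =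
      (if k = ω.1.2 then M ω.1.1 ω.1.2 * y ω.1.1 / pM ω.1 else 0) +
      (if k = ω.2 then b ω.2 / pb ω.2 else 0)) :
    (∀ k, ∑ ω : (Fin m × Fin n) × Fin n, (pM ω.1 * pb ω.2) * g ω k
        = (∑ i, M i k * y i) + b k) ∧
    (∑ ω : (Fin m × Fin n) × Fin n, (pM ω.1 * pb ω.2) * (∑ k, (g ω k) ^ 2)
        ≤ 2 * ((∑ j, |b j|) ^ 2 +
          (Finset.univ.sup' Finset.univ_nonempty (fun i => ∑ j, |M i j|)) ^ 2)) :=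
  stmt6_general M b y hynn hysum hrows hb pM hpM pb hpb g hg
end

section
/- Fix x ∈ [−b,b]^n, a matrix M ∈ R^{m×n}, and c ∈ R^m. Define a random vector g̃ by: sample (i,j) with probability q_{ij} = |M_{ij}|/Σ_{i',j'}|M_{i'j'}| and independently i' with probability |c_{i'}|/‖c‖_1, and set g̃ = −(M_{ij} x_j / q_{ij}) e_i + (c_{i'}/q_{i'}) e_{i'}. Then E[g̃] = −Mx + c, ‖g̃‖_∞ ≤ m(b‖M‖_∞ + ‖c‖_∞) almost surely, and for every probability vector y' ∈ Δ^m, E[Σ_i y'_i g̃_i²] ≤ 2m(‖c‖_∞² + b²‖M‖_∞²). -/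
/-!
The estimator is the sum of two independent importance-sampling estimators, of `-M x` (an entry
`(i, j)` drawn with probability `∝ |M i j|`) and of `c` (an index drawn with probability `∝ |c i|`).
For weights `w` sampled this way, `q a * (w a / q a) = w a` gives unbiasedness, `|w a / q a| ≤ ‖w‖₁`
gives the almost sure bound, and `q a * (w a / q a) ^ 2 = |w a| * ‖w‖₁` gives the second moment
once `(u + v) ^ 2 ≤ 2 u ^ 2 + 2 v ^ 2` separates the two parts. Finally
`∑ i j, |M i j| ≤ m ‖M‖_∞` and `‖c‖₁ ≤ m ‖c‖_∞`.
-/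

open Finset
open scoped Matrix

section L1Sampling

variable {α : Type*} [Fintype α] (w : α → ℝ)

/-- At `w a = 0` both `l1Sampling w a` and `w a / l1Sampling w a` are `0` (as `x / 0 = 0`), so the
sampling identities below hold at every `a`. -/
noncomputable def l1Sampling (a : α) : ℝ := |w a| / ∑ a', |w a'|

theorem sum_abs_pos_of_ne_zero {w : α → ℝ} {a : α} (ha : w a ≠ 0) : 0 < ∑ a', |w a'| :=
  sum_pos' (fun _ _ => abs_nonneg _) ⟨a, mem_univ a, abs_pos.mpr ha⟩

theorem l1Sampling_nonneg (a : α) : 0 ≤ l1Sampling w a := by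
  unfold l1Sampling; positivity

theorem sum_l1Sampling {w : α → ℝ} (hw : w ≠ 0) : ∑ a, l1Sampling w a = 1 := by
  obtain ⟨a, ha⟩ := Function.ne_iff.mp hw
  simp only [l1Sampling, ← sum_div, div_self (sum_abs_pos_of_ne_zero ha).ne']

theorem l1Sampling_ne_zero {w : α → ℝ} {a : α} (ha : w a ≠ 0) : l1Sampling w a ≠ 0 :=
  div_ne_zero (abs_ne_zero.mpr ha) (sum_abs_pos_of_ne_zero ha).ne'

theorem l1Sampling_mul_div (a : α) : l1Sampling w a * (w a / l1Sampling w a) = w a := by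
  rcases eq_or_ne (w a) 0 with ha | ha
  · simp [ha]
  · exact mul_div_cancel₀ _ (l1Sampling_ne_zero ha)

theorem abs_div_l1Sampling (a : α) (ha : w a ≠ 0) :
    |w a / l1Sampling w a| = ∑ a', |w a'| := by
  have hS : 0 ≤ ∑ a', |w a'| := sum_nonneg fun _ _ => abs_nonneg _
  rw [l1Sampling, abs_div, abs_div, abs_abs, abs_of_nonneg hS, div_div_cancel₀ (abs_ne_zero.mpr ha)]

theorem abs_div_l1Sampling_le (a : α) : |w a / l1Sampling w a| ≤ ∑ a', |w a'| := by
  rcases eq_or_ne (w a) 0 with ha | ha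
  · simpa [ha] using sum_nonneg fun _ _ => abs_nonneg _
  · exact (abs_div_l1Sampling w a ha).le

theorem l1Sampling_mul_div_sq (a : α) :
    l1Sampling w a * (w a / l1Sampling w a) ^ 2 = |w a| * ∑ a', |w a'| := by
  rcases eq_or_ne (w a) 0 with ha | ha
  · simp [ha]
  · have hS := sum_abs_pos_of_ne_zero ha
    unfold l1Sampling
    field_simp
    rw [sq_abs, sq]

end L1Sampling

theorem sum_prod_mul_smul_add {α β R E : Type*} [Fintype α] [Fintype β] [CommSemiring R]
    [AddCommMonoid E] [Module R E] {p : α → R} {q : β → R} (hp : ∑ a, p a = 1)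
    (hq : ∑ b, q b = 1) (f : α → E) (h : β → E) :
    ∑ ω : α × β, (p ω.1 * q ω.2) • (f ω.1 + h ω.2) = ∑ a, p a • f a + ∑ b, q b • h b := by
  rw [Fintype.sum_prod_type]
  simp only [smul_add, sum_add_distrib]
  congr 1
  · simp only [← sum_smul, ← mul_sum, hq, mul_one]
  · rw [sum_comm]
    simp only [← sum_smul, ← sum_mul, hp, one_mul]

theorem sum_mul_add_sq_le {ι : Type*} [Fintype ι] {y : ι → ℝ} (hy : ∀ i, 0 ≤ y i) (u v : ι → ℝ) :
    ∑ i, y i * (u i + v i) ^ 2 ≤ 2 * ∑ i, y i * u i ^ 2 + 2 * ∑ i, y i * v i ^ 2 := by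
  simp only [mul_sum, ← sum_add_distrib]
  gcongr with i
  nlinarith [hy i, add_sq_le (a := u i) (b := v i)]

theorem sum_mul_single_sq {ι : Type*} [Fintype ι] [DecidableEq ι] (y : ι → ℝ) (i : ι) (v : ℝ) :
    ∑ k, y k * (Pi.single i v : ι → ℝ) k ^ 2 = y i * v ^ 2 := by
  simp [Pi.single_apply]

section Estimators

variable {ι κ : Type*} [Fintype ι] [Fintype κ]

theorem sum_abs_entries_le_card_mul {M : Matrix ι κ ℝ} {K : ℝ} (hK : ∀ i, ∑ j, |M i j| ≤ K) :
    ∑ ij : ι × κ, |M ij.1 ij.2| ≤ Fintype.card ι * K := by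
  rw [Fintype.sum_prod_type]
  simpa using sum_le_card_nsmul univ _ K fun i _ => hK i

theorem sum_l1Sampling_entries {M : Matrix ι κ ℝ} (hM : M ≠ 0) :
    ∑ ij : ι × κ, l1Sampling (fun ij : ι × κ => M ij.1 ij.2) ij = 1 :=
  sum_l1Sampling fun h => hM (Matrix.ext fun i j => congrFun h (i, j))

variable [DecidableEq ι]

noncomputable def mulVecEstimator (M : Matrix ι κ ℝ) (x : κ → ℝ) (ij : ι × κ) : ι → ℝ :=
  Pi.single ij.1 (M ij.1 ij.2 / l1Sampling (fun ij : ι × κ => M ij.1 ij.2) ij * x ij.2)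

noncomputable def vecEstimator (c : ι → ℝ) (i : ι) : ι → ℝ :=
  Pi.single i (c i / l1Sampling c i)

theorem sum_l1Sampling_smul_mulVecEstimator (M : Matrix ι κ ℝ) (x : κ → ℝ) :
    ∑ ij : ι × κ, l1Sampling (fun ij : ι × κ => M ij.1 ij.2) ij • mulVecEstimator M x ij =
      M *ᵥ x := by
  ext k
  simp only [mulVecEstimator, Finset.sum_apply, Pi.smul_apply, smul_eq_mul, Pi.single_apply,
    mul_ite, mul_zero, ← mul_assoc, l1Sampling_mul_div]
  rw [Fintype.sum_prod_type]
  simp [Matrix.mulVec, dotProduct]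

theorem sum_l1Sampling_smul_vecEstimator (c : ι → ℝ) :
    ∑ i, l1Sampling c i • vecEstimator c i = c := by
  ext k
  simp [vecEstimator, Finset.sum_apply, Pi.single_apply, l1Sampling_mul_div]

variable (M : Matrix ι κ ℝ) (c : ι → ℝ) {x : κ → ℝ} {b : ℝ}

theorem abs_mulVecEstimator_le (hx : ∀ j, |x j| ≤ b) (ij : ι × κ) (k : ι) :
    |mulVecEstimator M x ij k| ≤ b * ∑ ij : ι × κ, |M ij.1 ij.2| := by
  have hb : 0 ≤ b := (abs_nonneg _).trans (hx ij.2)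
  rw [mulVecEstimator, Pi.single_apply]
  split_ifs
  · rw [abs_mul, mul_comm b]
    gcongr
    · exact abs_div_l1Sampling_le (fun ij : ι × κ => M ij.1 ij.2) ij
    · exact hx ij.2
  · simp only [abs_zero]
    positivity

theorem abs_vecEstimator_le (i k : ι) : |vecEstimator c i k| ≤ ∑ i, |c i| := by
  rw [vecEstimator, Pi.single_apply]
  split_ifs
  · exact abs_div_l1Sampling_le c i
  · simp only [abs_zero]
    positivity

variable {y : ι → ℝ} {K : ℝ}

theorem weightedSecondMoment_mulVecEstimator_le (hy : ∀ i, 0 ≤ y i) (hy1 : ∑ i, y i = 1)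
    (hx : ∀ j, |x j| ≤ b) (hK : ∀ i, ∑ j, |M i j| ≤ K) :
    ∑ ij : ι × κ, l1Sampling (fun ij : ι × κ => M ij.1 ij.2) ij *
        ∑ k, y k * mulVecEstimator M x ij k ^ 2 ≤
      b ^ 2 * (∑ ij : ι × κ, |M ij.1 ij.2|) * K := by
  set S := ∑ ij : ι × κ, |M ij.1 ij.2|
  have hS : 0 ≤ S := sum_nonneg fun _ _ => abs_nonneg _
  have hterm : ∀ ij : ι × κ, l1Sampling (fun ij : ι × κ => M ij.1 ij.2) ij *
      ∑ k, y k * mulVecEstimator M x ij k ^ 2 = y ij.1 * |x ij.2| ^ 2 * (|M ij.1 ij.2| * S) := by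
    intro ij
    rw [mulVecEstimator, sum_mul_single_sq, mul_pow,
      ← l1Sampling_mul_div_sq (fun ij : ι × κ => M ij.1 ij.2) ij, sq_abs]
    ring
  calc _ = ∑ ij : ι × κ, y ij.1 * |x ij.2| ^ 2 * (|M ij.1 ij.2| * S) :=
        sum_congr rfl fun ij _ => hterm ij
    _ ≤ ∑ ij : ι × κ, y ij.1 * b ^ 2 * (|M ij.1 ij.2| * S) := by
      gcongr with ij
      exacts [hy _, hx _]
    _ = b ^ 2 * S * ∑ i, y i * ∑ j, |M i j| := by
      rw [Fintype.sum_prod_type, mul_sum]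
      simp only [mul_sum]
      exact sum_congr rfl fun i _ => sum_congr rfl fun j _ => by ring
    _ ≤ b ^ 2 * S * ∑ i, y i * K := by
      gcongr with i
      exacts [hy i, hK i]
    _ = b ^ 2 * S * K := by rw [← sum_mul, hy1, one_mul]

theorem weightedSecondMoment_vecEstimator_le (hy : ∀ i, 0 ≤ y i) (hy1 : ∑ i, y i = 1)
    (hK : ∀ i, |c i| ≤ K) :
    ∑ i, l1Sampling c i * ∑ k, y k * vecEstimator c i k ^ 2 ≤ (∑ i, |c i|) * K := by
  have hterm : ∀ i, l1Sampling c i * ∑ k, y k * vecEstimator c i k ^ 2 =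
      y i * (|c i| * ∑ i, |c i|) := by
    intro i
    rw [vecEstimator, sum_mul_single_sq, ← l1Sampling_mul_div_sq]
    ring
  calc _ = ∑ i, y i * (|c i| * ∑ i, |c i|) := sum_congr rfl fun i _ => hterm i
    _ ≤ ∑ i, y i * (K * ∑ i, |c i|) := by
      gcongr with i
      exacts [hy i, hK i]
    _ = (∑ i, |c i|) * K := by rw [← sum_mul, hy1, one_mul, mul_comm]

noncomputable def estimator (x : κ → ℝ) (ω : (ι × κ) × ι) : ι → ℝ :=
  -mulVecEstimator M x ω.1 + vecEstimator c ω.2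

theorem sum_smul_estimator (hM : M ≠ 0) (hc : c ≠ 0) (x : κ → ℝ) :
    ∑ ω : (ι × κ) × ι, (l1Sampling (fun ij : ι × κ => M ij.1 ij.2) ω.1 * l1Sampling c ω.2) •
      estimator M c x ω = -(M *ᵥ x) + c := by
  simp only [estimator]
  rw [sum_prod_mul_smul_add (sum_l1Sampling_entries hM) (sum_l1Sampling hc)
    (fun ij => -mulVecEstimator M x ij)]
  simp only [smul_neg, sum_neg_distrib, sum_l1Sampling_smul_mulVecEstimator,
    sum_l1Sampling_smul_vecEstimator]

theorem abs_estimator_le (hx : ∀ j, |x j| ≤ b) (ω : (ι × κ) × ι) (k : ι) :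
    |estimator M c x ω k| ≤ b * ∑ ij : ι × κ, |M ij.1 ij.2| + ∑ i, |c i| := by
  calc |estimator M c x ω k| ≤ |mulVecEstimator M x ω.1 k| + |vecEstimator c ω.2 k| := by
        rw [estimator, Pi.add_apply, Pi.neg_apply, ← abs_neg (mulVecEstimator M x ω.1 k)]
        exact abs_add_le _ _
    _ ≤ _ := add_le_add (abs_mulVecEstimator_le M hx ω.1 k) (abs_vecEstimator_le c ω.2 k)

theorem weightedSecondMoment_estimator_le (hM : M ≠ 0) (hc : c ≠ 0) (hy : ∀ i, 0 ≤ y i)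
    (hy1 : ∑ i, y i = 1) (hx : ∀ j, |x j| ≤ b) {KM Kc : ℝ} (hKM : ∀ i, ∑ j, |M i j| ≤ KM)
    (hKc : ∀ i, |c i| ≤ Kc) :
    ∑ ω : (ι × κ) × ι, (l1Sampling (fun ij : ι × κ => M ij.1 ij.2) ω.1 * l1Sampling c ω.2) *
        ∑ k, y k * estimator M c x ω k ^ 2 ≤
      2 * (b ^ 2 * (∑ ij : ι × κ, |M ij.1 ij.2|) * KM + (∑ i, |c i|) * Kc) := by
  have hF := weightedSecondMoment_mulVecEstimator_le M hy hy1 hx hKM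
  have hH := weightedSecondMoment_vecEstimator_le c hy hy1 hKc
  set F := fun ij : ι × κ => ∑ k, y k * mulVecEstimator M x ij k ^ 2
  set H := fun i : ι => ∑ k, y k * vecEstimator c i k ^ 2
  calc _ ≤ ∑ ω : (ι × κ) × ι,
        (l1Sampling (fun ij : ι × κ => M ij.1 ij.2) ω.1 * l1Sampling c ω.2) *
          (2 * F ω.1 + 2 * H ω.2) := by
        refine sum_le_sum fun ω _ => mul_le_mul_of_nonneg_left ?_
          (mul_nonneg (l1Sampling_nonneg _ _) (l1Sampling_nonneg _ _))
        simpa only [estimator, Pi.add_apply, Pi.neg_apply, neg_sq] using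
          sum_mul_add_sq_le hy (-mulVecEstimator M x ω.1) (vecEstimator c ω.2)
    _ = 2 * ∑ ij, l1Sampling (fun ij : ι × κ => M ij.1 ij.2) ij * F ij +
        2 * ∑ i, l1Sampling c i * H i := by
        rw [mul_sum, mul_sum]
        simp only [mul_left_comm (2 : ℝ)]
        exact sum_prod_mul_smul_add (sum_l1Sampling_entries hM) (sum_l1Sampling hc)
          (fun ij => 2 * F ij) (fun i => 2 * H i)
    _ ≤ _ := by linarith

end Estimators

theorem stmt7_general {m n : ℕ} [NeZero m]
    (M : Matrix (Fin m) (Fin n) ℝ) (c : Fin m → ℝ) (b : ℝ) (hb : 0 ≤ b)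
    (x : Fin n → ℝ) (hx : ∀ j, |x j| ≤ b)
    (hM : M ≠ 0) (hc : c ≠ 0)
    (qM : Fin m × Fin n → ℝ)
    (hqM : ∀ ij, qM ij = |M ij.1 ij.2| / ∑ ij' : Fin m × Fin n, |M ij'.1 ij'.2|)
    (qc : Fin m → ℝ) (hqc : ∀ i', qc i' = |c i'| / ∑ i, |c i|)
    (g : (Fin m × Fin n) × Fin m → Fin m → ℝ)
    (hg : ∀ ω k, g ω k =
      -(if k = ω.1.1 then M ω.1.1 ω.1.2 * x ω.1.2 / qM ω.1 else 0) +
      (if k = ω.2 then c ω.2 / qc ω.2 else 0)) :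
    (∀ k, ∑ ω : (Fin m × Fin n) × Fin m, (qM ω.1 * qc ω.2) * g ω k
        = -(∑ j, M k j * x j) + c k) ∧
    (∀ ω : (Fin m × Fin n) × Fin m, ∀ k, |g ω k| ≤
        m * (b * (Finset.univ.sup' Finset.univ_nonempty (fun i => ∑ j, |M i j|)) +
          Finset.univ.sup' Finset.univ_nonempty (fun i => |c i|))) ∧
    (∀ y' : Fin m → ℝ, (∀ i, 0 ≤ y' i) → ∑ i, y' i = 1 →
      ∑ ω : (Fin m × Fin n) × Fin m, (qM ω.1 * qc ω.2) * (∑ i, y' i * (g ω i) ^ 2)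
        ≤ 2 * m * ((Finset.univ.sup' Finset.univ_nonempty (fun i => |c i|)) ^ 2 +
            b ^ 2 * (Finset.univ.sup' Finset.univ_nonempty (fun i => ∑ j, |M i j|)) ^ 2)) := by
  obtain rfl : qM = l1Sampling (fun ij : Fin m × Fin n => M ij.1 ij.2) := funext hqM
  obtain rfl : qc = l1Sampling c := funext hqc
  obtain rfl : g = estimator M c x := by
    funext ω k
    simp [hg, estimator, mulVecEstimator, vecEstimator, Pi.single_apply, div_mul_eq_mul_div]
  set KM := univ.sup' univ_nonempty fun i => ∑ j, |M i j|
  set Kc := univ.sup' univ_nonempty fun i => |c i|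
  have hKM : ∀ i, ∑ j, |M i j| ≤ KM := fun i => le_sup' (fun i => ∑ j, |M i j|) (mem_univ i)
  have hKc : ∀ i, |c i| ≤ Kc := fun i => le_sup' (fun i => |c i|) (mem_univ i)
  have hSM : ∑ ij : Fin m × Fin n, |M ij.1 ij.2| ≤ m * KM := by
    simpa using sum_abs_entries_le_card_mul hKM
  have hSc : ∑ i, |c i| ≤ m * Kc := by simpa using sum_le_card_nsmul univ _ Kc fun i _ => hKc i
  have hKM0 : 0 ≤ KM := (sum_nonneg fun _ _ => abs_nonneg _).trans (hKM 0)
  have hKc0 : 0 ≤ Kc := (abs_nonneg _).trans (hKc 0)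
  refine ⟨fun k => ?_, fun ω k => ?_, fun y hy hy1 => ?_⟩
  · simpa only [Finset.sum_apply, Pi.smul_apply, smul_eq_mul, Pi.add_apply, Pi.neg_apply,
      Matrix.mulVec, dotProduct]
      using congrFun (sum_smul_estimator M c hM hc x) k
  · linarith [abs_estimator_le M c hx ω k, mul_le_mul_of_nonneg_left hSM hb]
  · linarith [weightedSecondMoment_estimator_le M c hM hc hy hy1 hx hKM hKc,
      mul_le_mul_of_nonneg_left (mul_le_mul_of_nonneg_right hSM hKM0) (sq_nonneg b),
      mul_le_mul_of_nonneg_right hSc hKc0]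

/-- The y-side gradient estimator for the ℓ∞-ℓ₁ game: unbiased for `−Mx + c`,
bounded entries, and bounded second moment in every local norm on the simplex. -/
theorem stmt7 {m n : ℕ} [NeZero m] [NeZero n]
    (M : Matrix (Fin m) (Fin n) ℝ) (c : Fin m → ℝ) (b : ℝ) (hb : 0 ≤ b)
    (x : Fin n → ℝ) (hx : ∀ j, |x j| ≤ b)
    (hM : M ≠ 0) (hc : c ≠ 0)
    (qM : Fin m × Fin n → ℝ)
    (hqM : ∀ ij, qM ij = |M ij.1 ij.2| / ∑ ij' : Fin m × Fin n, |M ij'.1 ij'.2|)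
    (qc : Fin m → ℝ) (hqc : ∀ i', qc i' = |c i'| / ∑ i, |c i|)
    (g : (Fin m × Fin n) × Fin m → Fin m → ℝ)
    (hg : ∀ ω k, g ω k =
      -(if k = ω.1.1 then M ω.1.1 ω.1.2 * x ω.1.2 / qM ω.1 else 0) +
      (if k = ω.2 then c ω.2 / qc ω.2 else 0)) :
    (∀ k, ∑ ω : (Fin m × Fin n) × Fin m, (qM ω.1 * qc ω.2) * g ω k
        = -(∑ j, M k j * x j) + c k) ∧
    (∀ ω : (Fin m × Fin n) × Fin m, ∀ k, |g ω k| ≤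
        m * (b * (Finset.univ.sup' Finset.univ_nonempty (fun i => ∑ j, |M i j|)) +
          Finset.univ.sup' Finset.univ_nonempty (fun i => |c i|))) ∧
    (∀ y' : Fin m → ℝ, (∀ i, 0 ≤ y' i) → ∑ i, y' i = 1 →
      ∑ ω : (Fin m × Fin n) × Fin m, (qM ω.1 * qc ω.2) * (∑ i, y' i * (g ω i) ^ 2)
        ≤ 2 * m * ((Finset.univ.sup' Finset.univ_nonempty (fun i => |c i|)) ^ 2 +
            b ^ 2 * (Finset.univ.sup' Finset.univ_nonempty (fun i => ∑ j, |M i j|)) ^ 2)) :=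
  stmt7_general M c b hb x hx hM hc qM hqM qc hqc g hg
end

section
/- Consider an MDP with total number of state-action pairs A_tot, a value vector v with ‖v‖_∞ ≤ 2M, and rewards r ∈ [0,1]^A. Define the random vector g̃ by: sample (i,a_i) uniformly with probability 1/A_tot, then j with probability p_{ij}(a_i), and set g̃ = A_tot(v_i − v_j − r_{i,a_i}) e_{(i,a_i)}. Then E[g̃] = (Î − P)v − r, ‖g̃‖_∞ ≤ (4M+1)A_tot almost surely, and for every probability vector μ' ∈ Δ^A, E[Σ_{(i,a_i)} μ'_{i,a_i} g̃_{(i,a_i)}²] ≤ (4M+1)² A_tot. -/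
/-!
The estimator is supported on the sampled coordinate `(i, a)`, so averaging over the next state
`j ~ P (i, a)` and the uniform choice of `(i, a)` (whose weight `1 / A_tot` cancels one factor
`A_tot`) gives the unbiasedness. Each temporal-difference error `v_i − v_j − r_{i,a}` lies in
`[−(4M+1), 4M+1]`, which bounds the entries; the second moment in the local norm of `μ'` is an
average, under `μ' ⊗ P`, of squares bounded by `(4M+1)² A_tot²`, divided by `A_tot`.
-/

open Finset

lemma abs_single_le {ι : Type*} [DecidableEq ι] {x B : ℝ} (i a : ι) (hx : |x| ≤ B) (hB : 0 ≤ B) :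
    |(Pi.single i x : ι → ℝ) a| ≤ B := by
  rw [Pi.single_apply]
  split_ifs
  · exact hx
  · simpa using hB

section SingleCoordinate

variable {ι κ : Type*} [Fintype ι] [Fintype κ] [DecidableEq ι]

lemma sum_mul_single_fst (w c : ι × κ → ℝ) (a : ι) :
    ∑ ω, w ω * (Pi.single ω.1 (c ω) : ι → ℝ) a = ∑ j, w (a, j) * c (a, j) := by
  rw [Fintype.sum_prod_type, Finset.sum_eq_single a]
  · simp
  · intro i _ hi
    simp [Ne.symm hi]
  · simp

lemma sum_mul_sum_mul_single_fst_sq (w c : ι × κ → ℝ) (μ : ι → ℝ) :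
    ∑ ω, w ω * ∑ a, μ a * (Pi.single ω.1 (c ω) : ι → ℝ) a ^ 2 = ∑ ω, w ω * (μ ω.1 * c ω ^ 2) := by
  refine Finset.sum_congr rfl fun ω _ => ?_
  rw [Finset.sum_eq_single ω.1]
  · simp
  · intro a _ ha
    simp [ha]
  · simp

end SingleCoordinate

lemma sum_mul_stochastic_mul_le {ι κ : Type*} [Fintype ι] [Fintype κ]
    {P : Matrix ι κ ℝ} (hPnn : ∀ i j, 0 ≤ P i j) (hProw : ∀ i, ∑ j, P i j = 1)
    {μ : ι → ℝ} (hμnn : ∀ i, 0 ≤ μ i) (hμsum : ∑ i, μ i = 1)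
    {f : ι × κ → ℝ} {B : ℝ} (hf : ∀ ω, f ω ≤ B) :
    ∑ ω : ι × κ, μ ω.1 * P ω.1 ω.2 * f ω ≤ B :=
  calc ∑ ω : ι × κ, μ ω.1 * P ω.1 ω.2 * f ω
      ≤ ∑ ω : ι × κ, μ ω.1 * P ω.1 ω.2 * B :=
        Finset.sum_le_sum fun ω _ =>
          mul_le_mul_of_nonneg_left (hf ω) (mul_nonneg (hμnn _) (hPnn _ _))
    _ = B := by
        simp only [Fintype.sum_prod_type, ← Finset.sum_mul, ← Finset.mul_sum, hProw, mul_one,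
          hμsum, one_mul]

lemma abs_sub_sub_le {x y z M : ℝ} (hx : |x| ≤ 2 * M) (hy : |y| ≤ 2 * M) (hz : 0 ≤ z ∧ z ≤ 1) :
    |x - y - z| ≤ 4 * M + 1 := by
  rw [abs_le] at *
  constructor <;> linarith

lemma one_div_mul_mul_sq (n x : ℝ) : 1 / n * (n * x) ^ 2 = n * x ^ 2 := by
  rcases eq_or_ne n 0 with rfl | hn
  · simp
  · field_simp

theorem stmt9_general {S A : Type*} [Fintype S] [Fintype A] [DecidableEq A]
    (st : A → S) (P : Matrix A S ℝ)
    (hPnn : ∀ a j, 0 ≤ P a j) (hProw : ∀ a, ∑ j, P a j = 1)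
    (Atot : ℕ) (hAtot : Atot = Fintype.card A)
    (M : ℝ)
    (v : S → ℝ) (hv : ∀ i, |v i| ≤ 2 * M)
    (r : A → ℝ) (hr : ∀ a, 0 ≤ r a ∧ r a ≤ 1)
    (g : A × S → A → ℝ)
    (hg : ∀ ω a', g ω a' =
      if a' = ω.1 then (Atot : ℝ) * (v (st ω.1) - v ω.2 - r ω.1) else 0) :
    (∀ a', ∑ ω : A × S, ((1 / (Atot : ℝ)) * P ω.1 ω.2) * g ω a'
        = (v (st a') - ∑ j, P a' j * v j) - r a') ∧
    (∀ ω : A × S, ∀ a', |g ω a'| ≤ (4 * M + 1) * Atot) ∧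
    (∀ μ' : A → ℝ, (∀ a, 0 ≤ μ' a) → ∑ a, μ' a = 1 →
      ∑ ω : A × S, ((1 / (Atot : ℝ)) * P ω.1 ω.2) * (∑ a, μ' a * (g ω a) ^ 2)
        ≤ (4 * M + 1) ^ 2 * Atot) := by
  set δ : A × S → ℝ := fun ω => v (st ω.1) - v ω.2 - r ω.1
  have hδ (ω : A × S) : |δ ω| ≤ 4 * M + 1 := abs_sub_sub_le (hv _) (hv _) (hr _)
  obtain rfl : g = fun ω => Pi.single ω.1 (Atot * δ ω) := by
    ext ω a'
    rw [hg, Pi.single_apply]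
  refine ⟨fun a' => ?_, fun ω a' => ?_, fun μ' hμnn hμsum => ?_⟩
  · have : Nonempty A := ⟨a'⟩
    have hAtot0 : (Atot : ℝ) ≠ 0 := by
      rw [hAtot]
      exact Nat.cast_ne_zero.mpr Fintype.card_ne_zero
    rw [sum_mul_single_fst]
    simp only [δ]
    field_simp
    simp [mul_sub, Finset.sum_sub_distrib, ← Finset.sum_mul, hProw]
  · refine abs_single_le _ _ ?_
      (mul_nonneg ((abs_nonneg _).trans (hδ ω)) (Nat.cast_nonneg _))
    rw [abs_mul, Nat.abs_cast, mul_comm]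
    gcongr
    exact hδ ω
  · rw [sum_mul_sum_mul_single_fst_sq]
    calc ∑ ω : A × S, 1 / (Atot : ℝ) * P ω.1 ω.2 * (μ' ω.1 * (Atot * δ ω) ^ 2)
        = ∑ ω : A × S, μ' ω.1 * P ω.1 ω.2 * (Atot * δ ω ^ 2) := by
          refine Finset.sum_congr rfl fun ω _ => ?_
          rw [← one_div_mul_mul_sq (Atot : ℝ) (δ ω)]
          ring
      _ ≤ (4 * M + 1) ^ 2 * Atot :=
          sum_mul_stochastic_mul_le hPnn hProw hμnn hμsum fun ω => by
            rw [mul_comm]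
            gcongr ?_ * _
            exact sq_le_sq' (abs_le.mp (hδ ω)).1 (abs_le.mp (hδ ω)).2

/-- The μ-side gradient estimator for mixing AMDPs: sample a state-action pair
uniformly, a next state from its transition row, and output
`A_tot (v_i − v_j − r_{i,a}) e_{(i,a)}`. It is unbiased for `(Î − P)v − r`,
has entries bounded by `(4M+1)A_tot`, and second moment at most `(4M+1)² A_tot`
in every local norm on the simplex. -/
theorem stmt9 {S A : Type*} [Fintype S] [DecidableEq S] [Fintype A] [DecidableEq A]
    (st : A → S) (P : Matrix A S ℝ)
    (hPnn : ∀ a j, 0 ≤ P a j) (hProw : ∀ a, ∑ j, P a j = 1)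
    (Atot : ℕ) (hAtot : Atot = Fintype.card A)
    (M : ℝ) (hM : 0 < M)
    (v : S → ℝ) (hv : ∀ i, |v i| ≤ 2 * M)
    (r : A → ℝ) (hr : ∀ a, 0 ≤ r a ∧ r a ≤ 1)
    (g : A × S → A → ℝ)
    (hg : ∀ ω a', g ω a' =
      if a' = ω.1 then (Atot : ℝ) * (v (st ω.1) - v ω.2 - r ω.1) else 0) :
    (∀ a', ∑ ω : A × S, ((1 / (Atot : ℝ)) * P ω.1 ω.2) * g ω a'
        = (v (st a') - ∑ j, P a' j * v j) - r a') ∧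
    (∀ ω : A × S, ∀ a', |g ω a'| ≤ (4 * M + 1) * Atot) ∧
    (∀ μ' : A → ℝ, (∀ a, 0 ≤ μ' a) → ∑ a, μ' a = 1 →
      ∑ ω : A × S, ((1 / (Atot : ℝ)) * P ω.1 ω.2) * (∑ a, μ' a * (g ω a) ^ 2)
        ≤ (4 * M + 1) ^ 2 * Atot) :=
  stmt9_general st P hPnn hProw Atot hAtot M v hv r hr g hg
end

section
/- Let P^π be a row-stochastic matrix with stationary distribution ν^π satisfying ‖(I − P^π + 1(ν^π)ᵀ)^{-1}‖_∞ ≤ 2 t_mix, let r^π ∈ [0,1]^S, and let λ ∈ Δ^S satisfy ‖(λ − ν^π)ᵀ(I − P^π)‖_1 ≤ ε/(2 t_mix). Then (ν^π − λ)ᵀ r^π ≤ ε. -/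
/-! Since `A = I - P + 1 νᵀ` has right inverse `B` and `d = λ - ν` sums to zero,
`dᵀ = dᵀ A B = dᵀ (I - P) B`. Hence `dᵀ r = (dᵀ (I - P)) (B r)`, and Hölder's inequality bounds
this by `‖dᵀ (I - P)‖₁ ‖B‖_∞ ‖r‖_∞ ≤ ε / (2 t_mix) · 2 t_mix`. -/

open Finset

open Matrix

section

variable {S : Type*} [Fintype S]

theorem abs_dotProduct_le_sum_abs_mul (v w : S → ℝ) {C : ℝ} (hw : ∀ j, |w j| ≤ C) :
    |v ⬝ᵥ w| ≤ (∑ j, |v j|) * C :=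
  calc |v ⬝ᵥ w| ≤ ∑ j, |v j * w j| := abs_sum_le_sum_abs _ _
    _ ≤ ∑ j, |v j| * C := by
        gcongr with j
        rw [abs_mul]
        exact mul_le_mul_of_nonneg_left (hw j) (abs_nonneg _)
    _ = (∑ j, |v j|) * C := (sum_mul ..).symm

theorem abs_mulVec_le_matNormInf_mul [Nonempty S] (B : Matrix S S ℝ) (x : S → ℝ) {M : ℝ}
    (hx : ∀ k, |x k| ≤ M) (j : S) : |(B *ᵥ x) j| ≤ matNormInf B * M := by
  have hM : 0 ≤ M := (abs_nonneg _).trans (hx (Classical.arbitrary S))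
  calc |(B *ᵥ x) j| ≤ (∑ k, |B j k|) * M := abs_dotProduct_le_sum_abs_mul _ _ hx
    _ ≤ matNormInf B * M :=
        mul_le_mul_of_nonneg_right (le_sup' (fun i => ∑ k, |B i k|) (mem_univ j)) hM

theorem vecMul_add_const_rows_of_sum_eq_zero (M : Matrix S S ℝ) (ν d : S → ℝ)
    (hd : ∑ i, d i = 0) : d ᵥ* (M + Matrix.of fun _ j => ν j) = d ᵥ* M := by
  rw [vecMul_add, add_eq_left]
  ext j
  simp only [vecMul, dotProduct, of_apply, ← sum_mul, hd, zero_mul, Pi.zero_apply]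

end

theorem stmt12_general {S : Type*} [Fintype S] [DecidableEq S] [Nonempty S]
    (Ppi : Matrix S S ℝ)
    (ν : S → ℝ) (hνsum : ∑ i, ν i = 1)
    (tmix : ℕ) (htmix : 0 < tmix)
    (B : Matrix S S ℝ)
    (hB1 : (1 - Ppi + Matrix.of (fun _ j => ν j)) * B = 1)
    (hBnorm : matNormInf B ≤ 2 * tmix)
    (r : S → ℝ) (hr : ∀ i, 0 ≤ r i ∧ r i ≤ 1)
    (lam : S → ℝ) (hlamsum : ∑ i, lam i = 1)
    (ε : ℝ)
    (hlam : ∑ j, |∑ i, (lam i - ν i) * ((if i = j then 1 else 0) - Ppi i j)|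
      ≤ ε / (2 * tmix)) :
    ∑ i, (ν i - lam i) * r i ≤ ε := by
  set d := lam - ν
  have hd : ∑ i, d i = 0 := by simp [d, sum_sub_distrib, hνsum, hlamsum]
  have hdr : d ⬝ᵥ r = (d ᵥ* (1 - Ppi)) ⬝ᵥ (B *ᵥ r) := by
    rw [← vecMul_add_const_rows_of_sum_eq_zero _ ν d hd, ← dotProduct_mulVec, mulVec_mulVec,
      hB1, one_mulVec]
  have hlam' : ∑ j, |(d ᵥ* (1 - Ppi)) j| ≤ ε / (2 * tmix) := by
    simpa [vecMul, dotProduct, one_apply, d] using hlam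
  have hBr (j : S) : |(B *ᵥ r) j| ≤ matNormInf B := by
    have hr' (i : S) : |r i| ≤ 1 := abs_le.2 ⟨by linarith [hr i], (hr i).2⟩
    simpa using abs_mulVec_le_matNormInf_mul B r hr' j
  calc ∑ i, (ν i - lam i) * r i = -(d ⬝ᵥ r) := by
        simp only [d, dotProduct, Pi.sub_apply, ← sum_neg_distrib]
        exact sum_congr rfl fun i _ => by ring
    _ ≤ |(d ᵥ* (1 - Ppi)) ⬝ᵥ (B *ᵥ r)| := hdr ▸ neg_le_abs _
    _ ≤ (∑ j, |(d ᵥ* (1 - Ppi)) j|) * matNormInf B := abs_dotProduct_le_sum_abs_mul _ _ hBr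
    _ ≤ ε / (2 * tmix) * (2 * tmix) :=
        mul_le_mul hlam' hBnorm ((abs_nonneg _).trans (hBr (Classical.arbitrary S)))
        ((sum_nonneg fun _ _ => abs_nonneg _).trans hlam')
    _ = ε := div_mul_cancel₀ ε (by positivity)

/-- If `‖(λ − ν)ᵀ(I − Pπ)‖₁ ≤ ε/(2 tmix)` and the fundamental matrix of the mixing
chain has ∞-norm at most `2 tmix`, then `(ν − λ)ᵀ rπ ≤ ε` for rewards in `[0,1]`. -/
theorem stmt12 {S : Type*} [Fintype S] [DecidableEq S] [Nonempty S]
    (Ppi : Matrix S S ℝ) (hPnn : ∀ i j, 0 ≤ Ppi i j) (hProw : ∀ i, ∑ j, Ppi i j = 1)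
    (ν : S → ℝ) (hνnn : ∀ i, 0 ≤ ν i) (hνsum : ∑ i, ν i = 1)
    (hstat : ∀ j, ∑ i, ν i * Ppi i j = ν j)
    (tmix : ℕ) (htmix : 0 < tmix)
    (B : Matrix S S ℝ)
    (hB1 : (1 - Ppi + Matrix.of (fun _ j => ν j)) * B = 1)
    (hB2 : B * (1 - Ppi + Matrix.of (fun _ j => ν j)) = 1)
    (hBnorm : matNormInf B ≤ 2 * tmix)
    (r : S → ℝ) (hr : ∀ i, 0 ≤ r i ∧ r i ≤ 1)
    (lam : S → ℝ) (hlamnn : ∀ i, 0 ≤ lam i) (hlamsum : ∑ i, lam i = 1)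
    (ε : ℝ)
    (hlam : ∑ j, |∑ i, (lam i - ν i) * ((if i = j then 1 else 0) - Ppi i j)|
      ≤ ε / (2 * tmix)) :
    ∑ i, (ν i - lam i) * r i ≤ ε :=
  stmt12_general Ppi ν hνsum tmix htmix B hB1 hBnorm r hr lam hlamsum ε hlam
end

section
/- In the setting of the mixing AMDP saddle-point problem: let (v^ε, μ^ε) be a pair with duality gap at most ε, decompose μ^ε_{i,a} = λ^ε_i π_{i,a} with λ^ε ∈ Δ^S and policy π, let P^π := Π P be the induced S×S transition matrix with stationary distribution ν^π, and r^π := Π r. Assume (a) (μ^ε)ᵀ((Î − P)v* − r) + v̄* ≤ ε (from the gap bound), (b) ‖(λ^ε)ᵀ(P^π − I)‖_1 ≤ ε/M with M = 2 t_mix, (c) ‖(I − P^π + 1(ν^π)ᵀ)^{-1}‖_∞ ≤ 2 t_mix, and (d) ‖v*‖_∞ ≤ M. Then the average reward of π satisfies (ν^π)ᵀ r^π ≥ v̄* − 3ε. -/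
open Finset

/-!
The marginal `λ` of `μ^ε` is almost stationary for `P^π`: `δ := λᵀ(P^π − I)` has `‖δ‖₁ ≤ ε/M`.
Through `μ^ε = λ·π` the gap bound (a) reads `−δᵀv* − λᵀr^π + v̄* ≤ ε`, and `|δᵀv*| ≤ ‖δ‖₁‖v*‖∞ ≤ ε`,
so `λᵀr^π ≥ v̄* − 2ε`. Moreover `(λ − ν)ᵀ(I − P^π + 1νᵀ) = −δᵀ`, so inverting the fundamental
matrix gives `‖λ − ν‖₁ ≤ ‖δ‖₁ · 2 t_mix ≤ ε`, and as `0 ≤ r^π ≤ 1` the average rewards under `λ`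
and `ν` differ by at most `ε`.
-/

open Matrix

theorem abs_dotProduct_le_of_abs_le {ι : Type*} [Fintype ι] (x y : ι → ℝ) {C : ℝ}
    (hy : ∀ i, |y i| ≤ C) : |x ⬝ᵥ y| ≤ (∑ i, |x i|) * C :=
  calc |x ⬝ᵥ y| ≤ ∑ i, |x i * y i| := abs_sum_le_sum_abs _ _
    _ ≤ ∑ i, |x i| * C := sum_le_sum fun i _ => by
        rw [abs_mul]; exact mul_le_mul_of_nonneg_left (hy i) (abs_nonneg _)
    _ = (∑ i, |x i|) * C := (sum_mul _ _ _).symm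

theorem sum_abs_vecMul_le {m n : Type*} [Fintype m] [Fintype n] (x : m → ℝ)
    (B : Matrix m n ℝ) {C : ℝ} (hB : ∀ k, ∑ j, |B k j| ≤ C) :
    ∑ j, |(x ᵥ* B) j| ≤ (∑ k, |x k|) * C :=
  calc ∑ j, |(x ᵥ* B) j| ≤ ∑ j, ∑ k, |x k| * |B k j| := sum_le_sum fun j _ =>
        (abs_sum_le_sum_abs _ _).trans_eq (sum_congr rfl fun k _ => abs_mul _ _)
    _ = ∑ k, |x k| * ∑ j, |B k j| := by rw [sum_comm]; simp only [mul_sum]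
    _ ≤ ∑ k, |x k| * C := sum_le_sum fun k _ => mul_le_mul_of_nonneg_left (hB k) (abs_nonneg _)
    _ = (∑ k, |x k|) * C := (sum_mul _ _ _).symm

theorem sum_abs_row_le_matNormInf {S : Type*} [Fintype S] [Nonempty S] (B : Matrix S S ℝ)
    (k : S) : ∑ j, |B k j| ≤ matNormInf B :=
  le_sup' (fun i => ∑ j, |B i j|) (mem_univ k)

section Stationary

variable {S : Type*} [Fintype S] [DecidableEq S] (P : Matrix S S ℝ) {lam ν : S → ℝ}

theorem sub_stationary_vecMul_fundamental (hlam : ∑ i, lam i = 1) (hν : ∑ i, ν i = 1)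
    (hstat : ν ᵥ* P = ν) :
    (lam - ν) ᵥ* (1 - P + of fun _ j => ν j) = -(lam ᵥ* (P - 1)) := by
  have hrank_one : (lam - ν) ᵥ* (of fun _ j => ν j) = 0 := by
    ext j
    simp only [vecMul, dotProduct, of_apply, Pi.sub_apply, ← sum_mul, sum_sub_distrib, hlam, hν,
      sub_self, zero_mul, Pi.zero_apply]
  rw [vecMul_add, hrank_one, add_zero, vecMul_sub, vecMul_one, sub_vecMul, hstat, vecMul_sub,
    vecMul_one]
  abel

theorem sum_abs_sub_stationary_le [Nonempty S] {B : Matrix S S ℝ}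
    (hlam : ∑ i, lam i = 1) (hν : ∑ i, ν i = 1) (hstat : ν ᵥ* P = ν)
    (hB : (1 - P + of fun _ j => ν j) * B = 1) :
    ∑ j, |lam j - ν j| ≤ (∑ j, |(lam ᵥ* (P - 1)) j|) * matNormInf B := by
  have hsub : lam - ν = -(lam ᵥ* (P - 1)) ᵥ* B := by
    rw [← sub_stationary_vecMul_fundamental P hlam hν hstat, vecMul_vecMul, hB, vecMul_one]
  have := sum_abs_vecMul_le (-(lam ᵥ* (P - 1))) B (sum_abs_row_le_matNormInf B)
  simpa only [← hsub, Pi.sub_apply, Pi.neg_apply, abs_neg] using this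

end Stationary

section Policy

variable {S A : Type*} [DecidableEq S] [Fintype A] {st : A → S} {π : A → ℝ}

theorem abs_fiber_sum_policy_mul_le_one {r : A → ℝ} (hr : ∀ a, 0 ≤ r a ∧ r a ≤ 1)
    (hπnn : ∀ a, 0 ≤ π a) (hπrow : ∀ i, ∑ a ∈ univ.filter (fun a => st a = i), π a = 1) (i : S) :
    |∑ a ∈ univ.filter (fun a => st a = i), π a * r a| ≤ 1 := by
  have hnn : 0 ≤ ∑ a ∈ univ.filter (fun a => st a = i), π a * r a :=
    sum_nonneg fun a _ => mul_nonneg (hπnn a) (hr a).1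
  have hle : ∑ a ∈ univ.filter (fun a => st a = i), π a * r a ≤ 1 :=
    (hπrow i).symm ▸ sum_le_sum fun a _ => mul_le_of_le_one_right (hπnn a) (hr a).2
  exact abs_le.mpr ⟨by linarith, hle⟩

variable [Fintype S]

theorem sum_eq_one_of_fiber_sum {μ : A → ℝ} {lam : S → ℝ} (hμ : ∑ a, μ a = 1)
    (hlam : ∀ i, lam i = ∑ a ∈ univ.filter (fun a => st a = i), μ a) : ∑ i, lam i = 1 := by
  simp only [hlam]
  rw [sum_fiberwise, hμ]

variable {P : Matrix A S ℝ} {r : A → ℝ} {Ppi : Matrix S S ℝ} {rpi : S → ℝ}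

theorem fiber_sum_policy_mul_residual_eq
    (hπrow : ∀ i, ∑ a ∈ univ.filter (fun a => st a = i), π a = 1)
    (hPpi : ∀ i j, Ppi i j = ∑ a ∈ univ.filter (fun a => st a = i), π a * P a j)
    (hrpi : ∀ i, rpi i = ∑ a ∈ univ.filter (fun a => st a = i), π a * r a) (v : S → ℝ) (i : S) :
    ∑ a ∈ univ.filter (fun a => st a = i), π a * ((v (st a) - ∑ j, P a j * v j) - r a)
      = v i - (Ppi *ᵥ v) i - rpi i := by
  have hcurrent : ∑ a ∈ univ.filter (fun a => st a = i), π a * v (st a) = v i := by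
    rw [sum_congr rfl fun a ha => by rw [(mem_filter.mp ha).2], ← sum_mul, hπrow, one_mul]
  have hnext : ∑ a ∈ univ.filter (fun a => st a = i), π a * ∑ j, P a j * v j = (Ppi *ᵥ v) i := by
    simp only [mulVec, dotProduct, hPpi, sum_mul, mul_sum, mul_assoc]
    exact sum_comm
  simp only [mul_sub, sum_sub_distrib, hcurrent, hnext, ← hrpi]

theorem sum_mul_residual_eq {μ : A → ℝ} {lam : S → ℝ} (hdecomp : ∀ a, μ a = lam (st a) * π a)
    (hπrow : ∀ i, ∑ a ∈ univ.filter (fun a => st a = i), π a = 1)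
    (hPpi : ∀ i j, Ppi i j = ∑ a ∈ univ.filter (fun a => st a = i), π a * P a j)
    (hrpi : ∀ i, rpi i = ∑ a ∈ univ.filter (fun a => st a = i), π a * r a) (v : S → ℝ) :
    ∑ a, μ a * ((v (st a) - ∑ j, P a j * v j) - r a)
      = -((lam ᵥ* (Ppi - 1)) ⬝ᵥ v) - lam ⬝ᵥ rpi := by
  have hfiber : ∀ i, ∑ a ∈ univ.filter (fun a => st a = i),
      μ a * ((v (st a) - ∑ j, P a j * v j) - r a) = lam i * (v i - (Ppi *ᵥ v) i - rpi i) := by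
    intro i
    rw [← fiber_sum_policy_mul_residual_eq hπrow hPpi hrpi, mul_sum]
    refine sum_congr rfl fun a ha => ?_
    rw [hdecomp, (mem_filter.mp ha).2, mul_assoc]
  rw [← sum_fiberwise univ st, sum_congr rfl fun i _ => hfiber i, ← dotProduct_mulVec,
    sub_mulVec, one_mulVec]
  simp only [dotProduct, Pi.sub_apply, mul_sub, sum_sub_distrib]
  ring

end Policy

theorem stmt15_general {S A : Type*} [Fintype S] [DecidableEq S] [Nonempty S] [Fintype A]
    (st : A → S) (P : Matrix A S ℝ)
    (r : A → ℝ) (hr : ∀ a, 0 ≤ r a ∧ r a ≤ 1)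
    (tmix : ℕ) (htmix : 0 < tmix) (M : ℝ) (hMdef : M = 2 * tmix)
    (ε : ℝ)
    -- the approximate dual solution and its decomposition into marginal and policy
    (με : A → ℝ) (hμεsum : ∑ a, με a = 1)
    (lam : S → ℝ) (hlam : ∀ i, lam i = ∑ a ∈ Finset.univ.filter (fun a => st a = i), με a)
    (π : A → ℝ) (hπnn : ∀ a, 0 ≤ π a)
    (hπrow : ∀ i, ∑ a ∈ Finset.univ.filter (fun a => st a = i), π a = 1)
    (hdecomp : ∀ a, με a = lam (st a) * π a)
    -- the induced transition matrix, reward vector and stationary distribution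
    (Ppi : Matrix S S ℝ)
    (hPpi : ∀ i j, Ppi i j = ∑ a ∈ Finset.univ.filter (fun a => st a = i), π a * P a j)
    (rpi : S → ℝ)
    (hrpi : ∀ i, rpi i = ∑ a ∈ Finset.univ.filter (fun a => st a = i), π a * r a)
    (ν : S → ℝ) (hνsum : ∑ i, ν i = 1)
    (hstat : ∀ j, ∑ i, ν i * Ppi i j = ν j)
    -- the optimal value vector and optimal average reward
    (vstar : S → ℝ) (vbar : ℝ)
    -- (a) the gap bound
    (ha : (∑ a, με a * ((vstar (st a) - ∑ j, P a j * vstar j) - r a)) + vbar ≤ ε)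
    -- (b) approximate stationarity of the marginal
    (hb : ∑ j, |∑ i, lam i * (Ppi i j - (if i = j then 1 else 0))| ≤ ε / M)
    -- (c) mixing bound on the fundamental matrix
    (B : Matrix S S ℝ)
    (hB1 : (1 - Ppi + Matrix.of (fun _ j => ν j)) * B = 1)
    (hBnorm : matNormInf B ≤ 2 * tmix)
    -- (d) bound on the optimal value vector
    (hd : ∀ i, |vstar i| ≤ M) :
    ∑ i, ν i * rpi i ≥ vbar - 3 * ε := by
  have hM : 0 < M := by rw [hMdef]; positivity
  set δ := lam ᵥ* (Ppi - 1)
  have hδ : (∑ j, |δ j|) * M ≤ ε := (le_div_iff₀ hM).mp <| by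
    simpa only [δ, vecMul, dotProduct, Matrix.sub_apply, one_apply] using hb
  have hlam_reward : vbar - 2 * ε ≤ lam ⬝ᵥ rpi := by
    rw [sum_mul_residual_eq hdecomp hπrow hPpi hrpi] at ha
    have := abs_le.mp ((abs_dotProduct_le_of_abs_le δ vstar hd).trans hδ)
    linarith
  have hlam_near_ν : ∑ j, |lam j - ν j| ≤ ε :=
    calc ∑ j, |lam j - ν j| ≤ (∑ j, |δ j|) * matNormInf B :=
          sum_abs_sub_stationary_le Ppi (sum_eq_one_of_fiber_sum hμεsum hlam) hνsum
            (funext hstat) hB1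
      _ ≤ ε := (mul_le_mul_of_nonneg_left (hBnorm.trans_eq hMdef.symm)
          (sum_nonneg fun j _ => abs_nonneg _)).trans hδ
  have hreward_diff := abs_le.mp <| abs_dotProduct_le_of_abs_le (lam - ν) rpi fun i =>
    hrpi i ▸ abs_fiber_sum_policy_mul_le_one hr hπnn hπrow i
  have hsplit : ν ⬝ᵥ rpi = lam ⬝ᵥ rpi - (lam - ν) ⬝ᵥ rpi := by rw [sub_dotProduct]; ring
  change ν ⬝ᵥ rpi ≥ _
  simp only [Pi.sub_apply, mul_one] at hreward_diff
  linarith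

/-- Rounding an ε-approximate saddle-point solution of the mixing AMDP to a policy:
the induced policy has average reward at least `v̄* − 3ε`. -/
theorem stmt15 {S A : Type*} [Fintype S] [DecidableEq S] [Nonempty S] [Fintype A]
    (st : A → S) (P : Matrix A S ℝ)
    (hPnn : ∀ a j, 0 ≤ P a j) (hProw : ∀ a, ∑ j, P a j = 1)
    (r : A → ℝ) (hr : ∀ a, 0 ≤ r a ∧ r a ≤ 1)
    (tmix : ℕ) (htmix : 0 < tmix) (M : ℝ) (hMdef : M = 2 * tmix)
    (ε : ℝ)
    -- the approximate dual solution and its decomposition into marginal and policy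
    (με : A → ℝ) (hμεnn : ∀ a, 0 ≤ με a) (hμεsum : ∑ a, με a = 1)
    (lam : S → ℝ) (hlam : ∀ i, lam i = ∑ a ∈ Finset.univ.filter (fun a => st a = i), με a)
    (π : A → ℝ) (hπnn : ∀ a, 0 ≤ π a)
    (hπrow : ∀ i, ∑ a ∈ Finset.univ.filter (fun a => st a = i), π a = 1)
    (hdecomp : ∀ a, με a = lam (st a) * π a)
    -- the induced transition matrix, reward vector and stationary distribution
    (Ppi : Matrix S S ℝ)
    (hPpi : ∀ i j, Ppi i j = ∑ a ∈ Finset.univ.filter (fun a => st a = i), π a * P a j)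
    (rpi : S → ℝ)
    (hrpi : ∀ i, rpi i = ∑ a ∈ Finset.univ.filter (fun a => st a = i), π a * r a)
    (ν : S → ℝ) (hνnn : ∀ i, 0 ≤ ν i) (hνsum : ∑ i, ν i = 1)
    (hstat : ∀ j, ∑ i, ν i * Ppi i j = ν j)
    -- the optimal value vector and optimal average reward
    (vstar : S → ℝ) (vbar : ℝ)
    -- (a) the gap bound
    (ha : (∑ a, με a * ((vstar (st a) - ∑ j, P a j * vstar j) - r a)) + vbar ≤ ε)
    -- (b) approximate stationarity of the marginal
    (hb : ∑ j, |∑ i, lam i * (Ppi i j - (if i = j then 1 else 0))| ≤ ε / M)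
    -- (c) mixing bound on the fundamental matrix
    (B : Matrix S S ℝ)
    (hB1 : (1 - Ppi + Matrix.of (fun _ j => ν j)) * B = 1)
    (hB2 : B * (1 - Ppi + Matrix.of (fun _ j => ν j)) = 1)
    (hBnorm : matNormInf B ≤ 2 * tmix)
    -- (d) bound on the optimal value vector
    (hd : ∀ i, |vstar i| ≤ M) :
    ∑ i, ν i * rpi i ≥ vbar - 3 * ε :=
  stmt15_general st P r hr tmix htmix M hMdef ε με hμεsum lam hlam π hπnn hπrow hdecomp Ppi hPpi rpi
    hrpi ν hνsum hstat vstar vbar ha hb B hB1 hBnorm hd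
end

section
/- Let q ∈ Δ^S, γ ∈ (0,1), P^π row-stochastic with discounted occupancy ν^π := (1−γ)(I − γ(P^π)ᵀ)^{-1}q, r^π ∈ [0,1]^S, v* with ‖v*‖_∞ ≤ 1/(1−γ), and λ ∈ Δ^S. Assume (a) λᵀ((I − γP^π)v* − r^π) ≤ ε, (b) ‖(λ − ν^π)ᵀ(γP^π − I)‖_1 ≤ ε(1−γ), and (c) ‖λ − ν^π‖_1 ≤ ε. Then (ν^π)ᵀ r^π ≥ (1−γ) v̄* − 3ε, where (1−γ)v̄* = (1−γ)qᵀv* is the optimal discounted value (scaled by 1−γ). -/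
open Finset

/-- Rounding an ε-approximate saddle-point solution of the DMDP to a policy:
the induced policy has (scaled) discounted reward at least `(1−γ)v̄* − 3ε`. -/
theorem stmt16 {S : Type*} [Fintype S] [DecidableEq S]
    (γ : ℝ) (hγ0 : 0 < γ) (hγ1 : γ < 1)
    (q : S → ℝ) (hqnn : ∀ i, 0 ≤ q i) (hqsum : ∑ i, q i = 1)
    (Ppi : Matrix S S ℝ) (hPnn : ∀ i j, 0 ≤ Ppi i j) (hProw : ∀ i, ∑ j, Ppi i j = 1)
    -- discounted occupancy measure: (1−γ)qᵀ + νᵀ(γPπ − I) = 0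
    (ν : S → ℝ)
    (hν : ∀ j, (1 - γ) * q j + ∑ i, ν i * (γ * Ppi i j - (if i = j then 1 else 0)) = 0)
    (rpi : S → ℝ) (hrpi : ∀ i, 0 ≤ rpi i ∧ rpi i ≤ 1)
    (vstar : S → ℝ) (hvstar : ∀ i, |vstar i| ≤ 1 / (1 - γ))
    (lam : S → ℝ) (hlamnn : ∀ i, 0 ≤ lam i) (hlamsum : ∑ i, lam i = 1)
    (ε : ℝ)
    -- (a) the gap bound in state form: λᵀ((I − γPπ)v* − rπ) ≤ ε
    (ha : ∑ i, lam i * ((vstar i - γ * ∑ j, Ppi i j * vstar j) - rpi i) ≤ ε)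
    -- (b) approximate dual feasibility
    (hb : ∑ j, |∑ i, (lam i - ν i) * (γ * Ppi i j - (if i = j then 1 else 0))|
      ≤ ε * (1 - γ))
    -- (c) ℓ₁ closeness to the occupancy measure
    (hc : ∑ i, |lam i - ν i| ≤ ε) :
    ∑ i, ν i * rpi i ≥ (1 - γ) * (∑ i, q i * vstar i) - 3 * ε := by
  have hM : (0:ℝ) < 1 - γ := by linarith
  set A : S → S → ℝ := fun i j => γ * Ppi i j - (if i = j then 1 else 0) with hA
  -- row identity: ∑ j, A i j * vstar j = γ * (∑ j Ppi i j vstar j) - vstar i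
  have hrow : ∀ i, ∑ j, A i j * vstar j
      = γ * (∑ j, Ppi i j * vstar j) - vstar i := by
    intro i
    simp only [hA, sub_mul]
    rw [Finset.sum_sub_distrib]
    congr 1
    · rw [Finset.mul_sum]
      exact Finset.sum_congr rfl fun j _ => by ring
    · simp
  -- swap lemma
  have hswap : ∀ w : S → ℝ, ∑ i, w i * ∑ j, A i j * vstar j
      = ∑ j, (∑ i, w i * A i j) * vstar j := by
    intro w
    simp_rw [Finset.mul_sum, Finset.sum_mul, mul_assoc]
    exact Finset.sum_comm
  have hν' : ∀ j, ∑ i, ν i * A i j = -((1 - γ) * q j) := by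
    intro j
    have := hν j
    simp only [hA] at *
    linarith
  have hnuA : ∑ j, (∑ i, ν i * A i j) * vstar j
      = -((1 - γ) * ∑ j, q j * vstar j) := by
    rw [Finset.mul_sum, ← Finset.sum_neg_distrib]
    refine Finset.sum_congr rfl (fun j _ => ?_)
    rw [hν' j]; ring
  -- bound on the cross term from (b)
  have hcb : |∑ j, (∑ i, (lam i - ν i) * A i j) * vstar j| ≤ ε := by
    have hε : 0 ≤ ε * (1 - γ) := le_trans (Finset.sum_nonneg fun j _ => abs_nonneg _) hb
    calc |∑ j, (∑ i, (lam i - ν i) * A i j) * vstar j|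
        ≤ ∑ j, |(∑ i, (lam i - ν i) * A i j) * vstar j| :=
          Finset.abs_sum_le_sum_abs _ _
      _ ≤ ∑ j, |∑ i, (lam i - ν i) * A i j| * (1 / (1 - γ)) := by
          refine Finset.sum_le_sum fun j _ => ?_
          rw [abs_mul]
          exact mul_le_mul_of_nonneg_left (hvstar j) (abs_nonneg _)
      _ = (∑ j, |∑ i, (lam i - ν i) * A i j|) * (1 / (1 - γ)) :=
          (Finset.sum_mul _ _ _).symm
      _ ≤ (ε * (1 - γ)) * (1 / (1 - γ)) := by
          apply mul_le_mul_of_nonneg_right hb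
          positivity
      _ = ε := by field_simp
  -- decompose λᵀ A v*
  have hdec : ∑ j, (∑ i, lam i * A i j) * vstar j
      = -((1 - γ) * ∑ j, q j * vstar j)
        + ∑ j, (∑ i, (lam i - ν i) * A i j) * vstar j := by
    rw [← hnuA, ← Finset.sum_add_distrib]
    refine Finset.sum_congr rfl (fun j _ => ?_)
    rw [← add_mul, ← Finset.sum_add_distrib]
    congr 1
    refine Finset.sum_congr rfl (fun i _ => ?_)
    ring
  -- λᵀ((I − γP)v*) = (1−γ)qᵀv* − cross term
  have hT1 : ∑ i, lam i * (vstar i - γ * ∑ j, Ppi i j * vstar j)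
      = (1 - γ) * (∑ j, q j * vstar j)
        - ∑ j, (∑ i, (lam i - ν i) * A i j) * vstar j := by
    have : ∑ i, lam i * (vstar i - γ * ∑ j, Ppi i j * vstar j)
        = -∑ i, lam i * ∑ j, A i j * vstar j := by
      rw [← Finset.sum_neg_distrib]
      refine Finset.sum_congr rfl (fun i _ => ?_)
      rw [hrow i]; ring
    rw [this, hswap, hdec]; ring
  -- from (a): λᵀ r ≥ λᵀ((I−γP)v*) − ε
  have ha' : ∑ i, lam i * rpi i
      ≥ ∑ i, lam i * (vstar i - γ * ∑ j, Ppi i j * vstar j) - ε := by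
    have : ∑ i, lam i * ((vstar i - γ * ∑ j, Ppi i j * vstar j) - rpi i)
        = ∑ i, lam i * (vstar i - γ * ∑ j, Ppi i j * vstar j)
          - ∑ i, lam i * rpi i := by
      rw [← Finset.sum_sub_distrib]
      exact Finset.sum_congr rfl (fun i _ => by ring)
    linarith [ha, this]
  -- from (c): νᵀ r ≥ λᵀ r − ε
  have hc' : ∑ i, ν i * rpi i ≥ ∑ i, lam i * rpi i - ε := by
    have key : |∑ i, lam i * rpi i - ∑ i, ν i * rpi i| ≤ ε := by
      calc |∑ i, lam i * rpi i - ∑ i, ν i * rpi i|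
          = |∑ i, (lam i - ν i) * rpi i| := by
            rw [← Finset.sum_sub_distrib]
            congr 1
            exact Finset.sum_congr rfl (fun i _ => by ring)
        _ ≤ ∑ i, |(lam i - ν i) * rpi i| := Finset.abs_sum_le_sum_abs _ _
        _ ≤ ∑ i, |lam i - ν i| := by
            refine Finset.sum_le_sum fun i _ => ?_
            rw [abs_mul]
            have h1 : |rpi i| ≤ 1 := by
              rw [abs_le]; constructor <;> linarith [(hrpi i).1, (hrpi i).2]
            calc |lam i - ν i| * |rpi i| ≤ |lam i - ν i| * 1 :=
                  mul_le_mul_of_nonneg_left h1 (abs_nonneg _)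
              _ = |lam i - ν i| := mul_one _
        _ ≤ ε := hc
    have := (abs_le.mp key).2
    linarith
  have h1 := (abs_le.mp hcb).2
  linarith [ha', hc', hT1, h1]
end
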